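/- Let N ≥ 2, let λ_1,…,λ_{N²−1} be N×N complex matrices that are Hermitian, traceless, satisfy Tr[λ_μ λ_ν] = 2δ_{μν}, and are such that every traceless Hermitian N×N matrix is a real linear combination of the λ_μ. Let ψ_1,…,ψ_{N²} be unit vectors in ℂ^N with |⟨ψ_i, ψ_j⟩|² = 1/(N+1) for all i ≠ j, let P_i be the rank-one projection onto ψ_i, let r_i ∈ ℝ^{N²−1} have components (r_i)_μ = Tr[P_i λ_μ], and set â_i = r_i/|r_i|. Then for every real τ with −2/N ≤ τ ≤ 2(N−1)/N there exist real numbers r and s, each lying in the interval [−√(2/(N(N−1))), √(2(N−1)/N)], with r·s = τ, such that all the matrices R_i = (1/N)·I + (r/2)·Σ_μ (â_i)_μ λ_μ and S_i = (1/N)·I + (s/2)·Σ_μ (â_i)_μ λ_μ are positive semidefinite with trace one, and (1/N²)·I⊗I + (τ/(4(N²−1)))·Σ_{μ=1}^{N²−1} λ_μ ⊗ λ_μᵀ = Σ_{i=1}^{N²} (1/N²)·R_i ⊗ S_iᵀ. -/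

import Mathlib

/-!
Write `P_i = |ψ_i⟩⟨ψ_i|` and `X_i = P_i - 1/N`. Expanding `X_i` in the generators gives
`X_i = ½ Σ_μ (r_i)_μ λ_μ`, so `r_i · r_j = 2 Tr[X_i X_j] = 2 |⟨ψ_i, ψ_j⟩|² - 2/N`: all `|r_i|` are
equal and the `N²` unit vectors `â_i` in `ℝ^{N²-1}` have pairwise inner products `-1/(N²-1)`,
i.e. they are the vertices of a regular simplex. A regular simplex is centred, `Σ_i â_i = 0`, and
is a tight frame, `Σ_i â_i â_iᵀ = N²/(N²-1) · 1`; expanding `Σ_i R_i ⊗ S_iᵀ`, the centring kills the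
cross terms and the tight frame turns the quadratic term into `Σ_μ λ_μ ⊗ λ_μᵀ`.

Since `Σ_μ (â_i)_μ λ_μ = (2/|r_i|) X_i`, each `R_i` is the mixture `(1-t)/N · 1 + t P_i` with
`t = r/|r_i|`, which is positive semidefinite for `-1/(N-1) ≤ t ≤ 1`; this is the interval for `r`.
Writing it as `[-a, b]`, we have `a b = 2/N` and `b² = 2(N-1)/N`, so every separable `τ` factors
as `r s` with `r, s ∈ [-a, b]` (take `r = s = √τ` if `τ ≥ 0`, and `r = -a` otherwise).
-/

open Matrix BigOperators
open scoped Kronecker ComplexOrder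

namespace Matrix

section RankOne

variable {n : Type*} [Fintype n]

theorem star_dotProduct_self_eq_sum_norm_sq (ψ : n → ℂ) :
    star ψ ⬝ᵥ ψ = ((∑ k, ‖ψ k‖ ^ 2 : ℝ) : ℂ) := by
  simp [dotProduct, Complex.conj_mul']

theorem nonempty_of_star_dotProduct_self_eq_one {ψ : n → ℂ} (hψ : star ψ ⬝ᵥ ψ = 1) :
    Nonempty n := by
  by_contra h
  simp [not_nonempty_iff.1 h, dotProduct] at hψ

theorem trace_vecMulVec_star {ψ : n → ℂ} (hψ : star ψ ⬝ᵥ ψ = 1) :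
    (vecMulVec ψ (star ψ)).trace = 1 := by
  rw [trace_vecMulVec, dotProduct_comm, hψ]

theorem vecMulVec_star_mul_self {ψ : n → ℂ} (hψ : star ψ ⬝ᵥ ψ = 1) :
    vecMulVec ψ (star ψ) * vecMulVec ψ (star ψ) = vecMulVec ψ (star ψ) := by
  rw [vecMulVec_mul_vecMulVec, hψ, one_smul]

theorem trace_vecMulVec_star_mul (ψ φ : n → ℂ) :
    (vecMulVec ψ (star ψ) * vecMulVec φ (star φ)).trace = ((‖star ψ ⬝ᵥ φ‖ ^ 2 : ℝ) : ℂ) := by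
  rw [vecMulVec_mul_vecMulVec, trace_vecMulVec, dotProduct_smul, smul_eq_mul,
    dotProduct_comm ψ, star_dotProduct φ ψ, Complex.star_def, Complex.mul_conj']
  push_cast; rfl

variable [DecidableEq n]

theorem posSemidef_smul_one_add_smul_vecMulVec {ψ : n → ℂ} (hψ : star ψ ⬝ᵥ ψ = 1) {s t : ℝ}
    (hs : 0 ≤ s) (hst : 0 ≤ s + t) :
    ((s : ℂ) • 1 + (t : ℂ) • vecMulVec ψ (star ψ)).PosSemidef := by
  have hP := posSemidef_vecMulVec_self_star ψ
  rcases le_total 0 t with ht | ht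
  · exact (PosSemidef.one.smul (Complex.zero_le_real.2 hs)).add
      (hP.smul (Complex.zero_le_real.2 ht))
  · -- `1 - P` is again an orthogonal projection, hence of the form `Qᴴ * Q`.
    have hQ : (1 - vecMulVec ψ (star ψ)).PosSemidef := by
      have hproj : (1 - vecMulVec ψ (star ψ))ᴴ * (1 - vecMulVec ψ (star ψ)) =
          1 - vecMulVec ψ (star ψ) := by
        rw [conjTranspose_sub, conjTranspose_one, hP.isHermitian.eq, sub_mul, mul_sub, mul_sub,
          vecMulVec_star_mul_self hψ]
        simp
      exact hproj ▸ posSemidef_conjTranspose_mul_self _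
    have hsplit : (s : ℂ) • 1 + (t : ℂ) • vecMulVec ψ (star ψ) =
        ((s + t : ℝ) : ℂ) • 1 + ((-t : ℝ) : ℂ) • (1 - vecMulVec ψ (star ψ)) := by
      push_cast; module
    rw [hsplit]
    exact (PosSemidef.one.smul (Complex.zero_le_real.2 hst)).add
      (hQ.smul (Complex.zero_le_real.2 (neg_nonneg.2 ht)))

theorem isHermitian_vecMulVec_star_sub_smul_one (ψ : n → ℂ) :
    (vecMulVec ψ (star ψ) - (1 / Fintype.card n : ℂ) • 1).IsHermitian :=
  (posSemidef_vecMulVec_self_star ψ).isHermitian.sub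
    (isHermitian_one.smul (by simp [IsSelfAdjoint]))

theorem trace_vecMulVec_star_sub_smul_one {ψ : n → ℂ} (hψ : star ψ ⬝ᵥ ψ = 1) :
    (vecMulVec ψ (star ψ) - (1 / Fintype.card n : ℂ) • 1).trace = 0 := by
  have := nonempty_of_star_dotProduct_self_eq_one hψ
  simp [trace_vecMulVec_star hψ]

theorem trace_mul_vecMulVec_star_sub_smul_one {ψ φ : n → ℂ} (hψ : star ψ ⬝ᵥ ψ = 1)
    (hφ : star φ ⬝ᵥ φ = 1) :
    ((vecMulVec ψ (star ψ) - (1 / Fintype.card n : ℂ) • 1) *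
      (vecMulVec φ (star φ) - (1 / Fintype.card n : ℂ) • 1)).trace
      = ((‖star ψ ⬝ᵥ φ‖ ^ 2 - 1 / Fintype.card n : ℝ) : ℂ) := by
  have := nonempty_of_star_dotProduct_self_eq_one hψ
  simp only [sub_mul, mul_sub, Matrix.smul_mul, Matrix.mul_smul, Matrix.one_mul, Matrix.mul_one,
    trace_sub, trace_smul, trace_one, trace_vecMulVec_star_mul, trace_vecMulVec_star hψ,
    trace_vecMulVec_star hφ, smul_eq_mul]
  push_cast
  field_simp
  ring

end RankOne

end Matrix

section GeneratorFamily

variable {n κ : Type*} [Fintype n] [Fintype κ] [DecidableEq κ]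

structure IsCompleteGeneratorFamily (lam : κ → Matrix n n ℂ) : Prop where
  trace_eq_zero : ∀ μ, (lam μ).trace = 0
  trace_mul : ∀ μ ν, (lam μ * lam ν).trace = if μ = ν then 2 else 0
  exists_eq_sum : ∀ M : Matrix n n ℂ, M.IsHermitian → M.trace = 0 →
    ∃ c : κ → ℝ, M = ∑ μ, (c μ : ℂ) • lam μ

def blochVector (lam : κ → Matrix n n ℂ) (M : Matrix n n ℂ) (μ : κ) : ℝ :=
  (M * lam μ).trace.re

noncomputable def normalizedBlochVector (lam : κ → Matrix n n ℂ) (M : Matrix n n ℂ) (μ : κ) : ℝ :=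
  blochVector lam M μ / √(∑ ν, blochVector lam M ν ^ 2)

variable {lam : κ → Matrix n n ℂ}

theorem trace_sum_smul_mul (horth : ∀ μ ν, (lam μ * lam ν).trace = if μ = ν then 2 else 0)
    (c : κ → ℂ) (ν : κ) : ((∑ μ, c μ • lam μ) * lam ν).trace = 2 * c ν := by
  simp [Finset.sum_mul, trace_sum, horth, mul_comm]

theorem trace_sum_smul_mul_sum_smul
    (horth : ∀ μ ν, (lam μ * lam ν).trace = if μ = ν then 2 else 0) (c d : κ → ℂ) :
    ((∑ μ, c μ • lam μ) * ∑ ν, d ν • lam ν).trace = 2 * ∑ μ, c μ * d μ := by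
  simp only [Matrix.mul_smul, trace_sum, trace_smul, trace_sum_smul_mul horth,
    smul_eq_mul, Finset.mul_sum]
  exact Finset.sum_congr rfl fun _ _ => by ring

namespace IsCompleteGeneratorFamily

theorem eq_sum_blochVector_smul (hlam : IsCompleteGeneratorFamily lam) {M : Matrix n n ℂ}
    (hM : M.IsHermitian) (htr : M.trace = 0) :
    M = ∑ μ, ((blochVector lam M μ / 2 : ℝ) : ℂ) • lam μ := by
  obtain ⟨c, rfl⟩ := hlam.exists_eq_sum M hM htr
  congr! 3 with μ
  rw [blochVector, trace_sum_smul_mul hlam.trace_mul]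
  simp

theorem sum_blochVector_mul_blochVector (hlam : IsCompleteGeneratorFamily lam)
    {X Y : Matrix n n ℂ} (hX : X.IsHermitian) (hXtr : X.trace = 0) (hY : Y.IsHermitian)
    (hYtr : Y.trace = 0) :
    ∑ μ, blochVector lam X μ * blochVector lam Y μ = 2 * (X * Y).trace.re := by
  conv_rhs => rw [hlam.eq_sum_blochVector_smul hX hXtr, hlam.eq_sum_blochVector_smul hY hYtr,
    trace_sum_smul_mul_sum_smul hlam.trace_mul]
  simp only [← Complex.ofReal_mul, ← Complex.ofReal_sum, ← Complex.ofReal_ofNat,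
    Complex.ofReal_re, Finset.mul_sum]
  exact Finset.sum_congr rfl fun _ _ => by ring

variable [DecidableEq n]

theorem blochVector_sub_smul_one (hlam : IsCompleteGeneratorFamily lam) (A : Matrix n n ℂ)
    (c : ℂ) : blochVector lam (A - c • 1) = blochVector lam A := by
  ext μ
  simp [blochVector, sub_mul, hlam.trace_eq_zero μ]

theorem sum_blochVector_vecMulVec_smul (hlam : IsCompleteGeneratorFamily lam) {ψ : n → ℂ}
    (hψ : star ψ ⬝ᵥ ψ = 1) :
    ∑ μ, (blochVector lam (vecMulVec ψ (star ψ)) μ : ℂ) • lam μ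
      = (2 : ℂ) • (vecMulVec ψ (star ψ) - (1 / Fintype.card n : ℂ) • 1) := by
  conv_rhs => rw [hlam.eq_sum_blochVector_smul (isHermitian_vecMulVec_star_sub_smul_one ψ)
    (trace_vecMulVec_star_sub_smul_one hψ), hlam.blochVector_sub_smul_one, Finset.smul_sum]
  simp only [smul_smul]
  congr! 2
  push_cast
  ring

theorem sum_blochVector_vecMulVec_mul (hlam : IsCompleteGeneratorFamily lam) {ψ φ : n → ℂ}
    (hψ : star ψ ⬝ᵥ ψ = 1) (hφ : star φ ⬝ᵥ φ = 1) :
    ∑ μ, blochVector lam (vecMulVec ψ (star ψ)) μ * blochVector lam (vecMulVec φ (star φ)) μ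
      = 2 * (‖star ψ ⬝ᵥ φ‖ ^ 2 - 1 / Fintype.card n) := by
  have key := hlam.sum_blochVector_mul_blochVector
    (isHermitian_vecMulVec_star_sub_smul_one ψ) (trace_vecMulVec_star_sub_smul_one hψ)
    (isHermitian_vecMulVec_star_sub_smul_one φ) (trace_vecMulVec_star_sub_smul_one hφ)
  rwa [trace_mul_vecMulVec_star_sub_smul_one hψ hφ, Complex.ofReal_re,
    hlam.blochVector_sub_smul_one, hlam.blochVector_sub_smul_one] at key

end IsCompleteGeneratorFamily

end GeneratorFamily

section RegularSimplex

variable {ι κ : Type*} [Fintype ι] [Fintype κ] [DecidableEq ι]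

theorem Finset.sum_sum_ite_eq_const (a b : ℝ) :
    ∑ i : ι, ∑ j : ι, (if i = j then a else b)
      = Fintype.card ι * a + Fintype.card ι * (Fintype.card ι - 1) * b := by
  have hsplit : ∀ i j : ι, (if i = j then a else b) = (if i = j then a - b else 0) + b := by
    intros; split_ifs <;> ring
  simp only [hsplit, Finset.sum_add_distrib, Finset.sum_ite_eq, Finset.mem_univ, if_true,
    Finset.sum_const, Finset.card_univ, nsmul_eq_mul]
  ring

theorem sum_eq_zero_of_regular_simplex {v : ι → κ → ℝ}
    (hcard : Fintype.card ι = Fintype.card κ + 1)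
    (hgram : ∀ i j, ∑ μ, v i μ * v j μ = if i = j then 1 else -1 / (Fintype.card κ : ℝ))
    (μ : κ) : ∑ i, v i μ = 0 := by
  have : Nonempty κ := ⟨μ⟩
  have hsq : ∑ ν, (∑ i, v i ν) ^ 2 = 0 := by
    calc ∑ ν, (∑ i, v i ν) ^ 2 = ∑ i, ∑ j, ∑ ν, v i ν * v j ν := by
          simp only [sq, Finset.sum_mul_sum]
          rw [Finset.sum_comm]
          exact Finset.sum_congr rfl fun _ _ => Finset.sum_comm
      _ = 0 := by
          simp only [hgram, Finset.sum_sum_ite_eq_const, hcard]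
          push_cast
          field_simp
          ring
  exact pow_eq_zero_iff two_ne_zero |>.1 <|
    (Finset.sum_eq_zero_iff_of_nonneg fun ν _ => sq_nonneg _).1 hsq μ (Finset.mem_univ μ)

theorem sum_mul_eq_of_regular_simplex [DecidableEq κ] {v : ι → κ → ℝ}
    (hcard : Fintype.card ι = Fintype.card κ + 1)
    (hgram : ∀ i j, ∑ μ, v i μ * v j μ = if i = j then 1 else -1 / (Fintype.card κ : ℝ))
    (μ ν : κ) :
    ∑ i, v i μ * v i ν = if μ = ν then (Fintype.card ι / Fintype.card κ : ℝ) else 0 := by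
  have : Nonempty κ := ⟨μ⟩
  have hκ : (Fintype.card κ : ℝ) ≠ 0 := by positivity
  set c : ℝ := Fintype.card ι / Fintype.card κ
  let V : Matrix ι κ ℝ := v
  have hG : ∀ i j, (V * Vᵀ) i j = if i = j then 1 else -1 / (Fintype.card κ : ℝ) := hgram
  have htr : (Vᵀ * V).trace = Fintype.card ι := by
    rw [trace_mul_comm]
    simp [trace, hG]
  have htr_sq : (Vᵀ * V * (Vᵀ * V)).trace = Fintype.card ι * c := by
    rw [show Vᵀ * V * (Vᵀ * V) = Vᵀ * (V * Vᵀ * V) by simp only [Matrix.mul_assoc],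
      trace_mul_comm, Matrix.mul_assoc (V * Vᵀ)]
    have hGG : ∀ i j, (V * Vᵀ) i j * (V * Vᵀ) j i
        = if i = j then 1 else 1 / (Fintype.card κ : ℝ) ^ 2 := by
      intro i j
      simp only [hG, @eq_comm _ j i]
      split_ifs <;> ring
    simp only [trace, diag, mul_apply (M := V * Vᵀ), hGG, Finset.sum_sum_ite_eq_const, hcard, c]
    push_cast
    field_simp
    ring
  -- The frame operator `Vᵀ V` equals `c • 1` because `Vᵀ V - c • 1` has zero Frobenius norm,
  -- which only involves the traces of `Vᵀ V` and its square, i.e. of the Gram matrix `V Vᵀ`.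
  suffices hframe : Vᵀ * V = c • 1 by
    have hentry := congrFun (congrFun hframe μ) ν
    rw [mul_apply] at hentry
    simpa [one_apply] using hentry
  rw [← sub_eq_zero, ← trace_conjTranspose_mul_self_eq_zero_iff]
  have hsymm : (Vᵀ * V - c • 1)ᴴ = Vᵀ * V - c • 1 := by
    simp [conjTranspose_eq_transpose_of_trivial]
  rw [hsymm]
  simp only [sub_mul, mul_sub, Matrix.smul_mul, Matrix.mul_smul, Matrix.one_mul, Matrix.mul_one,
    trace_sub, trace_smul, trace_one, htr, htr_sq, smul_eq_mul]
  simp only [c, hcard]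
  push_cast
  field_simp
  ring

end RegularSimplex

theorem exists_mem_Icc_mul_eq {a b τ : ℝ} (ha : 0 < a) (hb : 0 ≤ b) (h₁ : -(a * b) ≤ τ)
    (h₂ : τ ≤ b ^ 2) : ∃ r ∈ Set.Icc (-a) b, ∃ s ∈ Set.Icc (-a) b, r * s = τ := by
  rcases le_total 0 τ with hτ | hτ
  · have hsqrt : √τ ∈ Set.Icc (-a) b :=
      ⟨by linarith [Real.sqrt_nonneg τ], (Real.sqrt_le_sqrt h₂).trans_eq (Real.sqrt_sq hb)⟩
    exact ⟨√τ, hsqrt, √τ, hsqrt, Real.mul_self_sqrt hτ⟩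
  · refine ⟨-a, ⟨le_rfl, by linarith⟩, -τ / a, ⟨?_, ?_⟩, by field_simp⟩
    · linarith [div_nonneg (neg_nonneg.2 hτ) ha.le]
    · rw [div_le_iff₀ ha]
      linarith

theorem sqrt_two_div_mul_sqrt_two_mul_div {N : ℝ} (hN : 1 < N) :
    √(2 / (N * (N - 1))) * √(2 * (N - 1) / N) = 2 / N := by
  have hN0 : 0 < N := by linarith
  have hN1 : 0 < N - 1 := by linarith
  rw [← Real.sqrt_mul (by positivity), ← Real.sqrt_sq (by positivity : (0 : ℝ) ≤ 2 / N)]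
  congr 1
  field_simp

theorem sub_one_mul_sqrt_two_div {N : ℝ} (hN : 1 < N) :
    (N - 1) * √(2 / (N * (N - 1))) = √(2 * (N - 1) / N) := by
  have hN0 : 0 < N := by linarith
  have hN1 : 0 < N - 1 := by linarith
  rw [← Real.sqrt_sq (by positivity : 0 ≤ (N - 1) * √(2 / (N * (N - 1)))), mul_pow,
    Real.sq_sqrt (by positivity)]
  congr 1
  field_simp

theorem exists_mem_Icc_sqrt_mul_eq {N τ : ℝ} (hN : 1 < N) (h₁ : -2 / N ≤ τ)
    (h₂ : τ ≤ 2 * (N - 1) / N) :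
    ∃ r ∈ Set.Icc (-√(2 / (N * (N - 1)))) (√(2 * (N - 1) / N)),
      ∃ s ∈ Set.Icc (-√(2 / (N * (N - 1)))) (√(2 * (N - 1) / N)), r * s = τ :=
  exists_mem_Icc_mul_eq (Real.sqrt_pos.2 (div_pos two_pos (mul_pos (by linarith) (by linarith))))
    (Real.sqrt_nonneg _) (by rwa [sqrt_two_div_mul_sqrt_two_mul_div hN, ← neg_div])
    (by rwa [Real.sq_sqrt (div_nonneg (by linarith) (by linarith))])

namespace Matrix

section Kronecker

variable {α ι l m n p : Type*} [Fintype ι]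

theorem sum_kronecker [NonUnitalNonAssocSemiring α] (A : ι → Matrix l m α) (B : Matrix n p α) :
    (∑ i, A i) ⊗ₖ B = ∑ i, A i ⊗ₖ B := by
  ext ⟨a, b⟩ ⟨c, d⟩
  simp [sum_apply, Finset.sum_mul]

theorem kronecker_sum [NonUnitalNonAssocSemiring α] (A : Matrix l m α) (B : ι → Matrix n p α) :
    A ⊗ₖ (∑ i, B i) = ∑ i, A ⊗ₖ B i := by
  ext ⟨a, b⟩ ⟨c, d⟩
  simp [sum_apply, Finset.mul_sum]

theorem sum_smul_one_add_smul_kronecker [CommRing α] [DecidableEq m] [DecidableEq n]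
    {A : ι → Matrix m m α} {B : ι → Matrix n n α} (hA : ∑ i, A i = 0) (hB : ∑ i, B i = 0)
    (p q x y : α) :
    ∑ i, (p • 1 + x • A i) ⊗ₖ (q • 1 + y • B i)
      = Fintype.card ι • (p * q) • ((1 : Matrix m m α) ⊗ₖ (1 : Matrix n n α)) +
        (x * y) • ∑ i, A i ⊗ₖ B i := by
  simp only [add_kronecker, kronecker_add, smul_kronecker, kronecker_smul, smul_smul,
    Finset.sum_add_distrib, ← Finset.smul_sum, ← sum_kronecker, ← kronecker_sum, hA, hB,
    zero_kronecker, kronecker_zero, smul_zero, add_zero, zero_add, Finset.sum_const,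
    Finset.card_univ]
  rw [smul_comm (q * p), mul_comm q p, mul_comm y x]

end Kronecker

variable {ι κ m n : Type*} [Fintype ι] [Fintype κ]

theorem sum_sum_ofReal_smul_eq_zero (lam : κ → Matrix m n ℂ) {a : ι → κ → ℝ}
    (h : ∀ μ, ∑ i, a i μ = 0) : ∑ i, ∑ μ, (a i μ : ℂ) • lam μ = 0 := by
  rw [Finset.sum_comm]
  simp [← Finset.sum_smul, h]

theorem sum_kronecker_transpose_of_sum_mul_eq_ite [DecidableEq κ] (lam : κ → Matrix m n ℂ)
    {a : ι → κ → ℝ} {c : ℝ} (h : ∀ μ ν, ∑ i, a i μ * a i ν = if μ = ν then c else 0) :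
    ∑ i, (∑ μ, (a i μ : ℂ) • lam μ) ⊗ₖ (∑ μ, (a i μ : ℂ) • lam μ)ᵀ
      = (c : ℂ) • ∑ μ, lam μ ⊗ₖ (lam μ)ᵀ := by
  have hexpand : ∀ i, (∑ μ, (a i μ : ℂ) • lam μ) ⊗ₖ (∑ μ, (a i μ : ℂ) • lam μ)ᵀ
      = ∑ μ, ∑ ν, ((a i μ * a i ν : ℝ) : ℂ) • (lam μ ⊗ₖ (lam ν)ᵀ) := fun i => by
    rw [transpose_sum, sum_kronecker]
    simp only [transpose_smul, smul_kronecker, kronecker_sum, kronecker_smul, smul_smul,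
      Complex.ofReal_mul, mul_comm]
  rw [Finset.sum_congr rfl fun i _ => hexpand i, Finset.sum_comm, Finset.smul_sum]
  refine Finset.sum_congr rfl fun μ _ => ?_
  rw [Finset.sum_comm]
  simp only [← Finset.sum_smul, ← Complex.ofReal_sum, h]
  simp

theorem sum_smul_kronecker_transpose_of_regular_simplex [DecidableEq ι] [DecidableEq κ]
    [DecidableEq n] (lam : κ → Matrix n n ℂ) {a : ι → κ → ℝ}
    (hcard : Fintype.card ι = Fintype.card κ + 1)
    (hgram : ∀ i j, ∑ μ, a i μ * a j μ = if i = j then 1 else -1 / (Fintype.card κ : ℝ))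
    (p x y : ℂ) :
    ∑ i, (1 / Fintype.card ι : ℂ) •
        ((p • 1 + x • ∑ μ, (a i μ : ℂ) • lam μ) ⊗ₖ (p • 1 + y • ∑ μ, (a i μ : ℂ) • lam μ)ᵀ)
      = p ^ 2 • ((1 : Matrix n n ℂ) ⊗ₖ (1 : Matrix n n ℂ)) +
        (x * y / Fintype.card κ) • ∑ μ, lam μ ⊗ₖ (lam μ)ᵀ := by
  have hcentroid := sum_sum_ofReal_smul_eq_zero lam (sum_eq_zero_of_regular_simplex hcard hgram)
  simp only [transpose_add, transpose_smul, transpose_one, ← Finset.smul_sum]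
  rw [sum_smul_one_add_smul_kronecker hcentroid
      (by rw [← transpose_sum, hcentroid, transpose_zero]),
    sum_kronecker_transpose_of_sum_mul_eq_ite lam (sum_mul_eq_of_regular_simplex hcard hgram)]
  have hι : (Fintype.card ι : ℂ) ≠ 0 := Nat.cast_ne_zero.2 (by omega)
  rw [← Nat.cast_smul_eq_nsmul ℂ]
  simp only [smul_add, smul_smul]
  congr 2
  · field_simp
  · push_cast
    field_simp

end Matrix

section SIC

variable {N : ℕ} {ι κ : Type*} [Fintype κ] {lam : κ → Matrix (Fin N) (Fin N) ℂ}

theorem trace_one_div_smul_one_add_smul_sum (htraceless : ∀ μ, (lam μ).trace = 0)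
    (hN : N ≠ 0) (x : ℂ) (a : κ → ℝ) :
    ((1 / N : ℂ) • (1 : Matrix (Fin N) (Fin N) ℂ) + x • ∑ μ, (a μ : ℂ) • lam μ).trace = 1 := by
  simp [trace_sum, htraceless, hN]

theorem sum_blochVector_mul_of_sic [DecidableEq ι] [DecidableEq κ]
    (hlam : IsCompleteGeneratorFamily lam)
    {ψ : ι → Fin N → ℂ} (hψ : ∀ i, star (ψ i) ⬝ᵥ ψ i = 1)
    (hsic : ∀ i j, i ≠ j → ‖star (ψ i) ⬝ᵥ ψ j‖ ^ 2 = 1 / ((N : ℝ) + 1)) (i j : ι) :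
    ∑ μ, blochVector lam (vecMulVec (ψ i) (star (ψ i))) μ *
        blochVector lam (vecMulVec (ψ j) (star (ψ j))) μ
      = if i = j then 2 * ((N : ℝ) - 1) / N else -2 / (N * (N + 1)) := by
  have := nonempty_of_star_dotProduct_self_eq_one (hψ i)
  have hN : (N : ℝ) ≠ 0 := by simpa using Fin.pos_iff_nonempty.2 this |>.ne'
  rw [hlam.sum_blochVector_vecMulVec_mul (hψ i) (hψ j), Fintype.card_fin]
  split_ifs with h
  · subst h
    rw [hψ i, norm_one]
    field_simp
  · rw [hsic i j h]
    field_simp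
    ring

theorem sum_normalizedBlochVector_mul_of_sic [DecidableEq ι] [DecidableEq κ]
    (hlam : IsCompleteGeneratorFamily lam) (hN : 2 ≤ N) {ψ : ι → Fin N → ℂ}
    (hψ : ∀ i, star (ψ i) ⬝ᵥ ψ i = 1)
    (hsic : ∀ i j, i ≠ j → ‖star (ψ i) ⬝ᵥ ψ j‖ ^ 2 = 1 / ((N : ℝ) + 1)) (i j : ι) :
    ∑ μ, normalizedBlochVector lam (vecMulVec (ψ i) (star (ψ i))) μ *
        normalizedBlochVector lam (vecMulVec (ψ j) (star (ψ j))) μ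
      = if i = j then 1 else -1 / ((N : ℝ) ^ 2 - 1) := by
  have hN' : (2 : ℝ) ≤ N := by exact_mod_cast hN
  have hq : (0 : ℝ) ≤ 2 * ((N : ℝ) - 1) / N := div_nonneg (by linarith) (by linarith)
  have hnorm : ∀ k, ∑ μ, blochVector lam (vecMulVec (ψ k) (star (ψ k))) μ ^ 2
      = 2 * ((N : ℝ) - 1) / N := fun k => by
    simpa [sq] using sum_blochVector_mul_of_sic hlam hψ hsic k k
  simp only [normalizedBlochVector, hnorm, div_mul_div_comm, ← Finset.sum_div,
    Real.mul_self_sqrt hq, sum_blochVector_mul_of_sic hlam hψ hsic i j]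
  split_ifs
  · have : (N : ℝ) - 1 ≠ 0 := by linarith
    field_simp
  · have : (N : ℝ) - 1 ≠ 0 := by linarith
    have : (N : ℝ) ^ 2 - 1 ≠ 0 := by nlinarith
    field_simp
    ring

theorem posSemidef_one_div_smul_one_add_smul_normalizedBlochVector [DecidableEq κ]
    (hlam : IsCompleteGeneratorFamily lam) (hN : 2 ≤ N) {ψ : Fin N → ℂ}
    (hψ : star ψ ⬝ᵥ ψ = 1) {r : ℝ}
    (hr : r ∈ Set.Icc (-√(2 / ((N : ℝ) * ((N : ℝ) - 1)))) (√(2 * ((N : ℝ) - 1) / N))) :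
    PosSemidef ((1 / N : ℂ) • (1 : Matrix (Fin N) (Fin N) ℂ) +
      ((r : ℂ) / 2) • ∑ μ, (normalizedBlochVector lam (vecMulVec ψ (star ψ)) μ : ℂ) • lam μ) := by
  have hN' : (1 : ℝ) < N := by exact_mod_cast hN
  have haL := sub_one_mul_sqrt_two_div hN'
  set L := √(2 * ((N : ℝ) - 1) / N)
  have hL : 0 < L := Real.sqrt_pos.2 (div_pos (by linarith) (by linarith))
  have hnorm : √(∑ μ, blochVector lam (vecMulVec ψ (star ψ)) μ ^ 2) = L := by
    congr 1
    simp only [sq, hlam.sum_blochVector_vecMulVec_mul hψ hψ, hψ, norm_one, Fintype.card_fin]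
    field_simp
  have hmix : (1 / N : ℂ) • (1 : Matrix (Fin N) (Fin N) ℂ) +
      ((r : ℂ) / 2) • ∑ μ, (normalizedBlochVector lam (vecMulVec ψ (star ψ)) μ : ℂ) • lam μ
      = (((1 - r / L) / N : ℝ) : ℂ) • 1 + ((r / L : ℝ) : ℂ) • vecMulVec ψ (star ψ) := by
    simp only [normalizedBlochVector, hnorm, div_eq_mul_inv (blochVector _ _ _),
      Complex.ofReal_mul, mul_comm _ ((L⁻¹ : ℝ) : ℂ), ← smul_smul, ← Finset.smul_sum,
      hlam.sum_blochVector_vecMulVec_smul hψ, Fintype.card_fin]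
    push_cast
    module
  have hr₁ : -L ≤ (N - 1) * r := by
    rw [← haL, ← mul_neg]
    exact mul_le_mul_of_nonneg_left hr.1 (by linarith)
  have hr₂ : r / L ≤ 1 := (div_le_one hL).2 hr.2
  rw [hmix]
  apply posSemidef_smul_one_add_smul_vecMulVec hψ
  · exact div_nonneg (by linarith) (by linarith)
  · rw [show (1 - r / L) / N + r / L = (L + (N - 1) * r) / (N * L) by field_simp; ring]
    exact div_nonneg (by linarith) (by positivity)

theorem isotropic_eq_sum_kronecker_of_regular_simplex (hN : N ≠ 0)
    (lam : Fin (N ^ 2 - 1) → Matrix (Fin N) (Fin N) ℂ) {a : Fin (N ^ 2) → Fin (N ^ 2 - 1) → ℝ}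
    (hgram : ∀ i j, ∑ μ, a i μ * a j μ = if i = j then 1 else -1 / ((N : ℝ) ^ 2 - 1))
    (r s : ℝ) :
    ((1 : ℂ) / N ^ 2) • ((1 : Matrix (Fin N) (Fin N) ℂ) ⊗ₖ (1 : Matrix (Fin N) (Fin N) ℂ)) +
        (((r * s : ℝ) : ℂ) / (4 * ((N : ℂ) ^ 2 - 1))) • ∑ μ, lam μ ⊗ₖ (lam μ)ᵀ
      = ∑ i, ((1 : ℂ) / N ^ 2) •
          ((((1 : ℂ) / N) • (1 : Matrix (Fin N) (Fin N) ℂ) +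
              ((r : ℂ) / 2) • ∑ μ, (a i μ : ℂ) • lam μ) ⊗ₖ
            (((1 : ℂ) / N) • (1 : Matrix (Fin N) (Fin N) ℂ) +
              ((s : ℂ) / 2) • ∑ μ, (a i μ : ℂ) • lam μ)ᵀ) := by
  have hN2 : 1 ≤ N ^ 2 := Nat.one_le_pow _ _ (Nat.pos_of_ne_zero hN)
  have hcard : Fintype.card (Fin (N ^ 2)) = Fintype.card (Fin (N ^ 2 - 1)) + 1 := by
    simp only [Fintype.card_fin]
    omega
  have hκ : (Fintype.card (Fin (N ^ 2 - 1)) : ℝ) = (N : ℝ) ^ 2 - 1 := by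
    simp [Nat.cast_sub hN2]
  have h := sum_smul_kronecker_transpose_of_regular_simplex lam hcard
    (by simpa only [hκ] using hgram) (1 / N) (r / 2) (s / 2)
  rw [Fintype.card_fin, Fintype.card_fin, Nat.cast_sub hN2] at h
  push_cast at h ⊢
  rw [h]
  congr 2
  · ring
  · rw [mul_comm 4, ← div_div]
    ring

end SIC

theorem isotropic_separable_decomposition_general (N : ℕ) (hN : 2 ≤ N)
    (lam : Fin (N ^ 2 - 1) → Matrix (Fin N) (Fin N) ℂ)
    (htraceless : ∀ μ, (lam μ).trace = 0)
    (horth : ∀ μ ν, (lam μ * lam ν).trace = if μ = ν then 2 else 0)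
    (hcomplete : ∀ M : Matrix (Fin N) (Fin N) ℂ, M.IsHermitian → M.trace = 0 →
      ∃ c : Fin (N ^ 2 - 1) → ℝ, M = ∑ μ, (c μ : ℂ) • lam μ)
    (ψ : Fin (N ^ 2) → Fin N → ℂ)
    (hψ_unit : ∀ i, ∑ k, ‖ψ i k‖ ^ 2 = 1)
    (hψ_sic : ∀ i j, i ≠ j →
      ‖∑ k, (starRingEnd ℂ) (ψ i k) * ψ j k‖ ^ 2 = 1 / ((N : ℝ) + 1))
    (P : Fin (N ^ 2) → Matrix (Fin N) (Fin N) ℂ)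
    (hP : ∀ i, P i = Matrix.vecMulVec (ψ i) (fun l => (starRingEnd ℂ) (ψ i l)))
    (rB : Fin (N ^ 2) → Fin (N ^ 2 - 1) → ℝ)
    (hrB : ∀ i μ, rB i μ = ((P i * lam μ).trace).re)
    (ahat : Fin (N ^ 2) → Fin (N ^ 2 - 1) → ℝ)
    (hahat : ∀ i μ, ahat i μ = rB i μ / Real.sqrt (∑ ν, rB i ν ^ 2))
    (τ : ℝ) (hτ₁ : -2 / N ≤ τ) (hτ₂ : τ ≤ 2 * ((N : ℝ) - 1) / N) :
    ∃ r s : ℝ,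
      (-Real.sqrt (2 / ((N : ℝ) * ((N : ℝ) - 1))) ≤ r ∧
        r ≤ Real.sqrt (2 * ((N : ℝ) - 1) / N)) ∧
      (-Real.sqrt (2 / ((N : ℝ) * ((N : ℝ) - 1))) ≤ s ∧
        s ≤ Real.sqrt (2 * ((N : ℝ) - 1) / N)) ∧
      r * s = τ ∧
      (∀ i, (((1 : ℂ) / N) • (1 : Matrix (Fin N) (Fin N) ℂ) +
          ((r : ℂ) / 2) • ∑ μ, (ahat i μ : ℂ) • lam μ).PosSemidef ∧
        (((1 : ℂ) / N) • (1 : Matrix (Fin N) (Fin N) ℂ) +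
          ((r : ℂ) / 2) • ∑ μ, (ahat i μ : ℂ) • lam μ).trace = 1) ∧
      (∀ i, (((1 : ℂ) / N) • (1 : Matrix (Fin N) (Fin N) ℂ) +
          ((s : ℂ) / 2) • ∑ μ, (ahat i μ : ℂ) • lam μ).PosSemidef ∧
        (((1 : ℂ) / N) • (1 : Matrix (Fin N) (Fin N) ℂ) +
          ((s : ℂ) / 2) • ∑ μ, (ahat i μ : ℂ) • lam μ).trace = 1) ∧
      ((1 : ℂ) / N ^ 2) •
          ((1 : Matrix (Fin N) (Fin N) ℂ) ⊗ₖ (1 : Matrix (Fin N) (Fin N) ℂ)) +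
        ((τ : ℂ) / (4 * ((N : ℂ) ^ 2 - 1))) • ∑ μ, lam μ ⊗ₖ (lam μ)ᵀ
        = ∑ i, ((1 : ℂ) / N ^ 2) •
            ((((1 : ℂ) / N) • (1 : Matrix (Fin N) (Fin N) ℂ) +
                ((r : ℂ) / 2) • ∑ μ, (ahat i μ : ℂ) • lam μ) ⊗ₖ
              (((1 : ℂ) / N) • (1 : Matrix (Fin N) (Fin N) ℂ) +
                ((s : ℂ) / 2) • ∑ μ, (ahat i μ : ℂ) • lam μ)ᵀ) := by
  have hlam : IsCompleteGeneratorFamily lam := ⟨htraceless, horth, hcomplete⟩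
  have hunit : ∀ i, star (ψ i) ⬝ᵥ ψ i = 1 := fun i => by
    rw [star_dotProduct_self_eq_sum_norm_sq, hψ_unit i, Complex.ofReal_one]
  obtain rfl : ahat = fun i => normalizedBlochVector lam (vecMulVec (ψ i) (star (ψ i))) := by
    funext i μ
    simp only [hahat, hrB, hP]
    rfl
  obtain ⟨r, hr, s, hs, rfl⟩ := exists_mem_Icc_sqrt_mul_eq (by exact_mod_cast hN) hτ₁ hτ₂
  refine ⟨r, s, hr, hs, rfl,
    fun i => ⟨posSemidef_one_div_smul_one_add_smul_normalizedBlochVector hlam hN (hunit i) hr,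
      trace_one_div_smul_one_add_smul_sum htraceless (by omega) _ _⟩,
    fun i => ⟨posSemidef_one_div_smul_one_add_smul_normalizedBlochVector hlam hN (hunit i) hs,
      trace_one_div_smul_one_add_smul_sum htraceless (by omega) _ _⟩,
    isotropic_eq_sum_kronecker_of_regular_simplex (by omega) lam
      (sum_normalizedBlochVector_mul_of_sic hlam hN hunit hψ_sic) r s⟩

/-- **Statement 10.** (Theorem 1 of the paper.)  Given a complete generator
family, a SIC-POVM and the regular simplex `â_i` of its normalized Bloch
vectors, every separable isotropic state, i.e. `-2/N ≤ τ ≤ 2(N-1)/N`, admits the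
separable decomposition
`ρ_I(τ) = Σ_i (1/N²) R_i(r) ⊗ S_i(s)ᵀ` with `r·s = τ` and all `R_i, S_i`
positive semidefinite trace-one matrices. -/
theorem isotropic_separable_decomposition (N : ℕ) (hN : 2 ≤ N)
    (lam : Fin (N ^ 2 - 1) → Matrix (Fin N) (Fin N) ℂ)
    (hherm : ∀ μ, (lam μ).IsHermitian)
    (htraceless : ∀ μ, (lam μ).trace = 0)
    (horth : ∀ μ ν, (lam μ * lam ν).trace = if μ = ν then 2 else 0)
    (hcomplete : ∀ M : Matrix (Fin N) (Fin N) ℂ, M.IsHermitian → M.trace = 0 →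
      ∃ c : Fin (N ^ 2 - 1) → ℝ, M = ∑ μ, (c μ : ℂ) • lam μ)
    (ψ : Fin (N ^ 2) → Fin N → ℂ)
    (hψ_unit : ∀ i, ∑ k, ‖ψ i k‖ ^ 2 = 1)
    (hψ_sic : ∀ i j, i ≠ j →
      ‖∑ k, (starRingEnd ℂ) (ψ i k) * ψ j k‖ ^ 2 = 1 / ((N : ℝ) + 1))
    (P : Fin (N ^ 2) → Matrix (Fin N) (Fin N) ℂ)
    (hP : ∀ i, P i = Matrix.vecMulVec (ψ i) (fun l => (starRingEnd ℂ) (ψ i l)))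
    (rB : Fin (N ^ 2) → Fin (N ^ 2 - 1) → ℝ)
    (hrB : ∀ i μ, rB i μ = ((P i * lam μ).trace).re)
    (ahat : Fin (N ^ 2) → Fin (N ^ 2 - 1) → ℝ)
    (hahat : ∀ i μ, ahat i μ = rB i μ / Real.sqrt (∑ ν, rB i ν ^ 2))
    (τ : ℝ) (hτ₁ : -2 / N ≤ τ) (hτ₂ : τ ≤ 2 * ((N : ℝ) - 1) / N) :
    ∃ r s : ℝ,
      (-Real.sqrt (2 / ((N : ℝ) * ((N : ℝ) - 1))) ≤ r ∧
        r ≤ Real.sqrt (2 * ((N : ℝ) - 1) / N)) ∧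
      (-Real.sqrt (2 / ((N : ℝ) * ((N : ℝ) - 1))) ≤ s ∧
        s ≤ Real.sqrt (2 * ((N : ℝ) - 1) / N)) ∧
      r * s = τ ∧
      (∀ i, (((1 : ℂ) / N) • (1 : Matrix (Fin N) (Fin N) ℂ) +
          ((r : ℂ) / 2) • ∑ μ, (ahat i μ : ℂ) • lam μ).PosSemidef ∧
        (((1 : ℂ) / N) • (1 : Matrix (Fin N) (Fin N) ℂ) +
          ((r : ℂ) / 2) • ∑ μ, (ahat i μ : ℂ) • lam μ).trace = 1) ∧
      (∀ i, (((1 : ℂ) / N) • (1 : Matrix (Fin N) (Fin N) ℂ) +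
          ((s : ℂ) / 2) • ∑ μ, (ahat i μ : ℂ) • lam μ).PosSemidef ∧
        (((1 : ℂ) / N) • (1 : Matrix (Fin N) (Fin N) ℂ) +
          ((s : ℂ) / 2) • ∑ μ, (ahat i μ : ℂ) • lam μ).trace = 1) ∧
      ((1 : ℂ) / N ^ 2) •
          ((1 : Matrix (Fin N) (Fin N) ℂ) ⊗ₖ (1 : Matrix (Fin N) (Fin N) ℂ)) +
        ((τ : ℂ) / (4 * ((N : ℂ) ^ 2 - 1))) • ∑ μ, lam μ ⊗ₖ (lam μ)ᵀ
        = ∑ i, ((1 : ℂ) / N ^ 2) •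
            ((((1 : ℂ) / N) • (1 : Matrix (Fin N) (Fin N) ℂ) +
                ((r : ℂ) / 2) • ∑ μ, (ahat i μ : ℂ) • lam μ) ⊗ₖ
              (((1 : ℂ) / N) • (1 : Matrix (Fin N) (Fin N) ℂ) +
                ((s : ℂ) / 2) • ∑ μ, (ahat i μ : ℂ) • lam μ)ᵀ) :=
  isotropic_separable_decomposition_general N hN lam htraceless horth hcomplete ψ hψ_unit hψ_sic P
    hP rB hrB ahat hahat τ hτ₁ hτ₂
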